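/- arXiv:2301.08103 — 5 statements merged into one kernel-verified Lean document; each statement's English description precedes it below -/
import Mathlib

section
/- Let A be an n×n complex matrix, v an n×b complex matrix, and P(z) = Σ_{i=0}^d z^i Γ_i a matrix polynomial with b×b coefficients such that det(P(λ)) ≠ 0 for every eigenvalue λ of A. Then there exists a unique n×b matrix w such that Σ_{i=0}^d A^i w Γ_i = v. -/
open Polynomial Matrix

/-- The block action `P(A)∘w = Σ_i A^i w Γ_i` of a matrix polynomial `P` on a block vector. -/
noncomputable def circ {N : Type*} [Fintype N] [DecidableEq N] {b : ℕ}
    (A : Matrix N N ℂ) (P : Polynomial (Matrix (Fin b) (Fin b) ℂ))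
    (w : Matrix N (Fin b) ℂ) : Matrix N (Fin b) ℂ :=
  P.sum fun i Γi => A ^ i * w * Γi

/-- Evaluation of a matrix polynomial at a scalar, `P(z) = Σ_i z^i Γ_i`. -/
noncomputable def matEval {b : ℕ} (P : Polynomial (Matrix (Fin b) (Fin b) ℂ)) (z : ℂ) :
    Matrix (Fin b) (Fin b) ℂ :=
  P.sum fun i Γi => z ^ i • Γi

namespace CircAux

variable {n b : ℕ}

/-- The polynomial with transposed coefficients. -/
noncomputable def tP (P : Polynomial (Matrix (Fin b) (Fin b) ℂ)) :
    Polynomial (Matrix (Fin b) (Fin b) ℂ) :=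
  ⟨⟨P.toFinsupp.coeff.mapRange (·ᵀ) Matrix.transpose_zero⟩⟩

@[simp] lemma coeff_tP (P : Polynomial (Matrix (Fin b) (Fin b) ℂ)) (k : ℕ) :
    (tP P).coeff k = (P.coeff k)ᵀ := rfl

lemma support_tP (P : Polynomial (Matrix (Fin b) (Fin b) ℂ)) :
    (tP P).support = P.support := by
  show (P.toFinsupp.coeff.mapRange (·ᵀ) Matrix.transpose_zero).support = _
  exact Finsupp.support_mapRange_of_injective Matrix.transpose_zero _
    (fun x y h => by simpa using congrArg Matrix.transpose h)

/-- Right multiplication by `Γᵀ` as an endomorphism. -/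
noncomputable def rmul (Γ : Matrix (Fin b) (Fin b) ℂ) :
    Module.End ℂ (Matrix (Fin n) (Fin b) ℂ) where
  toFun w := w * Γᵀ
  map_add' x y := Matrix.add_mul x y Γᵀ
  map_smul' c x := Matrix.smul_mul c x Γᵀ

/-- Right multiplication by transpose as a ring hom into endomorphisms. -/
noncomputable def rho : Matrix (Fin b) (Fin b) ℂ →+* Module.End ℂ (Matrix (Fin n) (Fin b) ℂ) where
  toFun := rmul
  map_one' := by ext w : 1; simp [rmul]
  map_mul' Γ Δ := by
    ext w : 1
    simp [rmul, Matrix.transpose_mul, Matrix.mul_assoc]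
  map_zero' := by ext w : 1; simp [rmul]
  map_add' Γ Δ := by ext w : 1; simp [rmul, Matrix.transpose_add, Matrix.mul_add]

/-- Left multiplication as an algebra hom into endomorphisms. -/
noncomputable def lmul : Matrix (Fin n) (Fin n) ℂ →ₐ[ℂ] Module.End ℂ (Matrix (Fin n) (Fin b) ℂ) where
  toFun B :=
    { toFun := fun w => B * w
      map_add' := fun x y => Matrix.mul_add B x y
      map_smul' := fun c x => Matrix.mul_smul B c x }
  map_one' := by ext w : 1; simp
  map_mul' B C := by
    ext w : 1
    exact Matrix.mul_assoc B C w
  map_zero' := by ext w : 1; simp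
  map_add' B C := by ext w : 1; exact Matrix.add_mul B C w
  commutes' c := by
    ext w : 1
    show (algebraMap ℂ (Matrix (Fin n) (Fin n) ℂ) c) * w = c • w
    rw [Algebra.algebraMap_eq_smul_one, Matrix.smul_mul, Matrix.one_mul]

lemma rho_commute (A : Matrix (Fin n) (Fin n) ℂ) (Γ : Matrix (Fin b) (Fin b) ℂ) :
    Commute (rho Γ) (lmul A : Module.End ℂ (Matrix (Fin n) (Fin b) ℂ)) := by
  ext w : 1
  show A * w * Γᵀ = A * (w * Γᵀ)
  rw [Matrix.mul_assoc]

/-- The main evaluation homomorphism: `X ↦ (A * ·)`, `C Γ ↦ (· * Γᵀ)`. -/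
noncomputable def Phi (A : Matrix (Fin n) (Fin n) ℂ) :
    Polynomial (Matrix (Fin b) (Fin b) ℂ) →+* Module.End ℂ (Matrix (Fin n) (Fin b) ℂ) :=
  eval₂RingHom' rho (lmul A) (rho_commute A)

lemma Phi_tP_apply (A : Matrix (Fin n) (Fin n) ℂ) (P : Polynomial (Matrix (Fin b) (Fin b) ℂ))
    (w : Matrix (Fin n) (Fin b) ℂ) : Phi A (tP P) w = circ A P w := by
  show eval₂ rho (lmul A) (tP P) w = circ A P w
  rw [eval₂_eq_sum, Polynomial.sum_def, support_tP]
  rw [circ, Polynomial.sum_def]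
  rw [LinearMap.coe_sum, Finset.sum_apply]
  refine Finset.sum_congr rfl fun i _ => ?_
  rw [coeff_tP, ← map_pow (lmul (n := n) (b := b)) A i]
  show A ^ i * w * (P.coeff i)ᵀᵀ = A ^ i * w * P.coeff i
  rw [Matrix.transpose_transpose]

lemma eval_tP (P : Polynomial (Matrix (Fin b) (Fin b) ℂ)) (μ : ℂ) :
    (tP P).eval (Matrix.scalar (Fin b) μ) = (matEval P μ)ᵀ := by
  rw [eval_eq_sum, Polynomial.sum_def, support_tP, matEval, Polynomial.sum_def]
  rw [Matrix.transpose_sum]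
  refine Finset.sum_congr rfl fun i _ => ?_
  rw [coeff_tP, Matrix.transpose_smul, ← map_pow, scalar_apply]
  ext r s
  simp [Matrix.mul_diagonal, mul_comm]

lemma rho_comp_algebraMap :
    (rho (n := n) (b := b)).comp (algebraMap ℂ (Matrix (Fin b) (Fin b) ℂ)) =
      algebraMap ℂ (Module.End ℂ (Matrix (Fin n) (Fin b) ℂ)) := by
  refine RingHom.ext fun c => ?_
  ext w : 1
  show w * (algebraMap ℂ (Matrix (Fin b) (Fin b) ℂ) c)ᵀ = c • w
  rw [Algebra.algebraMap_eq_smul_one, Matrix.transpose_smul, Matrix.transpose_one,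
    Matrix.mul_smul, Matrix.mul_one]

end CircAux

open CircAux in
/-- If `det P(λ) ≠ 0` for every eigenvalue `λ` of `A`, then for every block vector `v`
there is a unique block vector `w` with `P(A)∘w = v`. -/
theorem exists_unique_circ_eq {n b : ℕ}
    (A : Matrix (Fin n) (Fin n) ℂ) (P : Polynomial (Matrix (Fin b) (Fin b) ℂ))
    (v : Matrix (Fin n) (Fin b) ℂ)
    (hP : ∀ μ ∈ spectrum ℂ A, (matEval P μ).det ≠ 0) :
    ∃! w : Matrix (Fin n) (Fin b) ℂ, circ A P w = v := by
  rcases Nat.eq_zero_or_pos n with hn | hn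
  · subst hn
    refine ⟨v, Subsingleton.elim _ _, fun y _ => Subsingleton.elim _ _⟩
  -- set up the matrix of polynomials and its determinant
  have : NeZero n := ⟨hn.ne'⟩
  set N : Matrix (Fin b) (Fin b) (Polynomial ℂ) := matPolyEquiv.symm (tP P) with hN
  set δ : Polynomial ℂ := N.det with hδ
  -- `δ.eval μ = det (matEval P μ)`
  have heval : ∀ μ : ℂ, δ.eval μ = (matEval P μ).det := by
    intro μ
    rw [hδ, _root_.eval_det, hN, AlgEquiv.apply_symm_apply, eval_tP, Matrix.det_transpose]
  -- `aeval A δ` is a unit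
  have hspec : (spectrum ℂ A).Nonempty :=
    spectrum.nonempty_of_isAlgClosed_of_finiteDimensional ℂ A
  have hu : IsUnit (Polynomial.aeval A δ) := by
    by_contra h
    have h0 : (0 : ℂ) ∈ spectrum ℂ (Polynomial.aeval A δ) := (spectrum.zero_mem_iff ℂ).mpr h
    rw [spectrum.map_polynomial_aeval_of_nonempty A δ hspec] at h0
    obtain ⟨μ, hμ, hμ0⟩ := h0
    exact hP μ hμ (by rw [← heval]; exact hμ0)
  -- the key identities coming from the adjugate
  have e1 : tP P * matPolyEquiv N.adjugate = δ.map (algebraMap ℂ (Matrix (Fin b) (Fin b) ℂ)) := by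
    have h := congrArg matPolyEquiv (Matrix.mul_adjugate N)
    rwa [_root_.map_mul, hN, AlgEquiv.apply_symm_apply, matPolyEquiv_smul_one] at h
  have e2 : matPolyEquiv N.adjugate * tP P = δ.map (algebraMap ℂ (Matrix (Fin b) (Fin b) ℂ)) := by
    have h := congrArg matPolyEquiv (Matrix.adjugate_mul N)
    rwa [_root_.map_mul, hN, AlgEquiv.apply_symm_apply, matPolyEquiv_smul_one] at h
  have e3 : Phi (b := b) A (δ.map (algebraMap ℂ (Matrix (Fin b) (Fin b) ℂ))) =
      lmul (Polynomial.aeval A δ) := by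
    show eval₂ rho (lmul A) _ = _
    rw [eval₂_map, rho_comp_algebraMap, ← Polynomial.aeval_def]
    exact Polynomial.aeval_algHom_apply lmul A δ
  have HQ : Phi A (tP P) * Phi A (matPolyEquiv N.adjugate) = lmul (Polynomial.aeval A δ) := by
    rw [← _root_.map_mul, e1, e3]
  have HQ' : Phi A (matPolyEquiv N.adjugate) * Phi A (tP P) = lmul (Polynomial.aeval A δ) := by
    rw [← _root_.map_mul, e2, e3]
  have hU : IsUnit (lmul (Polynomial.aeval A δ) :
      Module.End ℂ (Matrix (Fin n) (Fin b) ℂ)) := hu.map lmul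
  have hUb : Function.Bijective (lmul (Polynomial.aeval A δ) :
      Module.End ℂ (Matrix (Fin n) (Fin b) ℂ)) := (Module.End.isUnit_iff _).mp hU
  have hbij : Function.Bijective (Phi A (tP P) :
      Matrix (Fin n) (Fin b) ℂ →ₗ[ℂ] Matrix (Fin n) (Fin b) ℂ) := by
    constructor
    · intro x y hxy
      have h1 : (Phi A (matPolyEquiv N.adjugate) * Phi A (tP P)) x =
          (Phi A (matPolyEquiv N.adjugate) * Phi A (tP P)) y := by
        rw [Module.End.mul_apply, Module.End.mul_apply, hxy]
      rw [HQ'] at h1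
      exact hUb.injective h1
    · intro z
      obtain ⟨y, hy⟩ := hUb.surjective z
      refine ⟨Phi A (matPolyEquiv N.adjugate) y, ?_⟩
      have h1 := congrFun (congrArg (fun (f : Module.End ℂ (Matrix (Fin n) (Fin b) ℂ)) =>
        (f : Matrix (Fin n) (Fin b) ℂ → Matrix (Fin n) (Fin b) ℂ)) HQ) y
      simpa [Module.End.mul_apply, hy] using h1
  obtain ⟨w, hw, hw'⟩ := hbij.existsUnique v
  refine ⟨w, ?_, fun y hy => hw' y ?_⟩
  · show circ A P w = v
    rw [← Phi_tP_apply]; exact hw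
  · show Phi A (tP P) y = v
    rw [Phi_tP_apply]; exact hy
end

section
/- Let z ∈ ℂ, v ∈ ℂ^{n×b}, w ∈ ℂ^{m×b}, and R(z₀) = P(z₀)/Q(z₀) a rational b×b matrix with R(z) invertible. Then R(zI_n)∘^{-1}(v w^H) = v·(R^H(z̄ I_m)∘^{-1}w)^H, where R^H(z₀) = P^H(z₀)/Q̄(z₀) with P^H having conjugate-transposed coefficients and Q̄ having conjugated coefficients. -/
open Polynomial Matrix

/-- `P(A)∘⁻¹ v`: the block vector `w` with `P(A)∘w = v`, when it exists uniquely. -/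
noncomputable def circInv {N : Type*} [Fintype N] [DecidableEq N] {b : ℕ}
    (A : Matrix N N ℂ) (P : Polynomial (Matrix (Fin b) (Fin b) ℂ))
    (v : Matrix N (Fin b) ℂ) : Matrix N (Fin b) ℂ :=
  open Classical in
  if h : ∃! w : Matrix N (Fin b) ℂ, circ A P w = v then h.choose else 0

/-- `R(A)∘v = Q(A)⁻¹ (P(A)∘v)` for the rational matrix `R(z) = P(z)/Q(z)`. -/
noncomputable def ratCirc {N : Type*} [Fintype N] [DecidableEq N] {b : ℕ}
    (A : Matrix N N ℂ) (P : Polynomial (Matrix (Fin b) (Fin b) ℂ)) (Q : Polynomial ℂ)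
    (v : Matrix N (Fin b) ℂ) : Matrix N (Fin b) ℂ :=
  (Polynomial.aeval A Q)⁻¹ * circ A P v

/-- `R(A)∘⁻¹v = Q(A) (P(A)∘⁻¹v)` for the rational matrix `R(z) = P(z)/Q(z)`. -/
noncomputable def ratCircInv {N : Type*} [Fintype N] [DecidableEq N] {b : ℕ}
    (A : Matrix N N ℂ) (P : Polynomial (Matrix (Fin b) (Fin b) ℂ)) (Q : Polynomial ℂ)
    (v : Matrix N (Fin b) ℂ) : Matrix N (Fin b) ℂ :=
  Polynomial.aeval A Q * circInv A P v

/-- Evaluation of the rational matrix `R(z) = P(z)/Q(z)` at a scalar. -/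
noncomputable def ratEval {b : ℕ} (P : Polynomial (Matrix (Fin b) (Fin b) ℂ))
    (Q : Polynomial ℂ) (z : ℂ) : Matrix (Fin b) (Fin b) ℂ :=
  (Q.eval z)⁻¹ • matEval P z

/-- `P^H(z) = Σ_i z^i Γ_iᴴ`: the matrix polynomial with conjugate-transposed coefficients. -/
noncomputable def polyH {b : ℕ} (P : Polynomial (Matrix (Fin b) (Fin b) ℂ)) :
    Polynomial (Matrix (Fin b) (Fin b) ℂ) :=
  ∑ i ∈ P.support, Polynomial.C ((P.coeff i)ᴴ) * Polynomial.X ^ i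

-- helpers
lemma matEval_add' {b : ℕ} (p q : Polynomial (Matrix (Fin b) (Fin b) ℂ)) (z : ℂ) :
    matEval (p + q) z = matEval p z + matEval q z :=
  Polynomial.sum_add_index p q _ (fun _ => smul_zero _) (fun _ a c => smul_add _ a c)

lemma matEval_CmulXpow' {b : ℕ} (A : Matrix (Fin b) (Fin b) ℂ) (i : ℕ) (z : ℂ) :
    matEval (Polynomial.C A * Polynomial.X ^ i) z = z ^ i • A := by
  rw [Polynomial.C_mul_X_pow_eq_monomial, matEval, Polynomial.sum_monomial_index]
  exact smul_zero _

lemma circ_smul_one' {n b : ℕ} (z : ℂ) (P : Polynomial (Matrix (Fin b) (Fin b) ℂ))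
    (u : Matrix (Fin n) (Fin b) ℂ) :
    circ (z • (1 : Matrix (Fin n) (Fin n) ℂ)) P u = u * matEval P z := by
  rw [circ, matEval, Polynomial.sum_def, Polynomial.sum_def, Matrix.mul_sum]
  refine Finset.sum_congr rfl fun i _ => ?_
  rw [_root_.smul_pow, one_pow, Matrix.smul_mul, Matrix.smul_mul, Matrix.one_mul, Matrix.mul_smul]

lemma matEval_polyH' {b : ℕ} (P : Polynomial (Matrix (Fin b) (Fin b) ℂ)) (z : ℂ) :
    matEval (polyH P) (starRingEnd ℂ z) = (matEval P z)ᴴ := by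
  have h : ∀ s : Finset ℕ,
      matEval (∑ i ∈ s, Polynomial.C ((P.coeff i)ᴴ) * Polynomial.X ^ i) (starRingEnd ℂ z)
        = ∑ i ∈ s, (starRingEnd ℂ z) ^ i • (P.coeff i)ᴴ := by
    intro s
    induction s using Finset.induction_on with
    | empty => simp [matEval]
    | insert _ _ hx ih =>
        rw [Finset.sum_insert hx, Finset.sum_insert hx, matEval_add', matEval_CmulXpow', ih]
  rw [polyH, h, matEval, Polynomial.sum_def, Matrix.conjTranspose_sum]
  refine Finset.sum_congr rfl fun i _ => ?_
  rw [Matrix.conjTranspose_smul, star_pow, ← starRingEnd_apply]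

lemma aeval_smul_one' {n : ℕ} (z : ℂ) (Q : Polynomial ℂ) :
    Polynomial.aeval (z • (1 : Matrix (Fin n) (Fin n) ℂ)) Q
      = (Q.eval z) • (1 : Matrix (Fin n) (Fin n) ℂ) := by
  have h1 : z • (1 : Matrix (Fin n) (Fin n) ℂ) = algebraMap ℂ _ z :=
    (Algebra.algebraMap_eq_smul_one z).symm
  rw [h1, Polynomial.aeval_algebraMap_apply, Algebra.algebraMap_eq_smul_one]
  congr 1

lemma circInv_smul_one' {n b : ℕ} (z : ℂ) (P : Polynomial (Matrix (Fin b) (Fin b) ℂ))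
    (hM : IsUnit (matEval P z)) (v : Matrix (Fin n) (Fin b) ℂ) :
    circInv (z • (1 : Matrix (Fin n) (Fin n) ℂ)) P v = v * (matEval P z)⁻¹ := by
  have hd : IsUnit (matEval P z).det := (Matrix.isUnit_iff_isUnit_det _).mp hM
  have key : ∀ u : Matrix (Fin n) (Fin b) ℂ,
      circ (z • (1 : Matrix (Fin n) (Fin n) ℂ)) P u = v ↔ u = v * (matEval P z)⁻¹ := by
    intro u
    rw [circ_smul_one']
    constructor
    · intro h
      rw [← h, Matrix.mul_assoc, Matrix.mul_nonsing_inv _ hd, Matrix.mul_one]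
    · intro h
      rw [h, Matrix.mul_assoc, Matrix.nonsing_inv_mul _ hd, Matrix.mul_one]
  have hex : ∃! u : Matrix (Fin n) (Fin b) ℂ,
      circ (z • (1 : Matrix (Fin n) (Fin n) ℂ)) P u = v :=
    ⟨v * (matEval P z)⁻¹, (key _).mpr rfl, fun y hy => (key y).mp hy⟩
  rw [circInv, dif_pos hex]
  exact ((key _).mp hex.choose_spec.1)


/-- `R(zI_n)∘⁻¹(v wᴴ) = v·(R^H(z̄ I_m)∘⁻¹ w)ᴴ`, where `R^H = P^H/Q̄`. -/
theorem ratCircInv_smul_one_mul_conjTranspose {n m b : ℕ} (z : ℂ)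
    (P : Polynomial (Matrix (Fin b) (Fin b) ℂ)) (Q : Polynomial ℂ)
    (hQ : Q.eval z ≠ 0) (hR : IsUnit (ratEval P Q z))
    (v : Matrix (Fin n) (Fin b) ℂ) (w : Matrix (Fin m) (Fin b) ℂ) :
    ratCircInv (z • (1 : Matrix (Fin n) (Fin n) ℂ)) P Q v * wᴴ
      = v * (ratCircInv ((starRingEnd ℂ z) • (1 : Matrix (Fin m) (Fin m) ℂ))
          (polyH P) (Q.map (starRingEnd ℂ)) w)ᴴ := by
  set M := matEval P z with hMdef
  have hM : IsUnit M := by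
    have h1 : IsUnit ((Q.eval z)⁻¹ • M) := hR
    have h2 : M = (Q.eval z) • ((Q.eval z)⁻¹ • M) := by
      rw [smul_smul, mul_inv_cancel₀ hQ, one_smul]
    rw [h2]
    have h3 : IsUnit ((Q.eval z) • (1 : Matrix (Fin b) (Fin b) ℂ)) := by
      refine ⟨⟨(Q.eval z) • 1, (Q.eval z)⁻¹ • 1, ?_, ?_⟩, rfl⟩ <;>
        rw [smul_mul_smul_comm, one_mul] <;>
        [rw [mul_inv_cancel₀ hQ, one_smul]; rw [inv_mul_cancel₀ hQ, one_smul]]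
    have := h3.mul h1
    rwa [smul_mul_assoc, one_mul] at this
  have hMH : IsUnit Mᴴ := by
    rw [Matrix.isUnit_iff_isUnit_det, Matrix.det_conjTranspose, isUnit_iff_ne_zero]
    simpa [isUnit_iff_ne_zero] using (Matrix.isUnit_iff_isUnit_det _).mp hM
  have heval : (Q.map (starRingEnd ℂ)).eval (starRingEnd ℂ z) = starRingEnd ℂ (Q.eval z) := by
    rw [Polynomial.eval_map, Polynomial.eval₂_hom]
  rw [ratCircInv, ratCircInv, circInv_smul_one' z P hM v,
    circInv_smul_one' (starRingEnd ℂ z) (polyH P) (by rw [matEval_polyH']; exact hMH) w,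
    aeval_smul_one', aeval_smul_one', heval, matEval_polyH']
  rw [Matrix.conjTranspose_mul, Matrix.conjTranspose_mul, Matrix.conjTranspose_smul,
    Matrix.conjTranspose_one, ← Matrix.conjTranspose_nonsing_inv,
    Matrix.conjTranspose_conjTranspose]
  simp only [Matrix.smul_mul, Matrix.mul_smul, Matrix.one_mul, Matrix.mul_one, Matrix.mul_assoc, starRingEnd_apply, star_star]
end

section
/- Let A ∈ ℂ^{db×db} and v ∈ ℂ^{db×b}. Suppose A = U T U^{-1} where T = diag(Θ_1, …, Θ_d) is block diagonal with b×b blocks, and write W = U^{-1}v with block rows W_1, …, W_d ∈ ℂ^{b×b}, each invertible. Set S_i = W_i^{-1} Θ_i W_i. Then each S_i is a left solvent of any monic block characteristic polynomial P(z) of A with respect to v, i.e., P(S_i) = 0 for all i. -/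
open Polynomial Matrix

/-- Block (right-coefficient) evaluation `P(S) = Σ_i S^i Γ_i`. -/
noncomputable def blockEval {b : ℕ} (S : Matrix (Fin b) (Fin b) ℂ)
    (P : Polynomial (Matrix (Fin b) (Fin b) ℂ)) : Matrix (Fin b) (Fin b) ℂ :=
  P.sum fun i Γi => S ^ i * Γi

/-- The `i`-th `b×b` block row of a `db×b` block vector. -/
def blockRowOf {d b : ℕ} (W : Matrix (Fin b × Fin d) (Fin b) ℂ) (i : Fin d) :
    Matrix (Fin b) (Fin b) ℂ :=
  Matrix.of fun s t => W (s, i) t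

/-!
Everything follows from one observation: if `X * A = B * X` then `X * A ^ k = B ^ k * X`, hence
`X * (P(A)∘w) = P(B)∘(X * w)`. The chain `U⁻¹`, the projection onto the `i`-th block row, and
`W_i⁻¹` intertwines `A` with `diag(Θ)`, then `diag(Θ)` with `Θ_i`, then `Θ_i` with `S_i`, and carries
`v` to `U⁻¹ v`, `W_i`, `1`. Applying it to `P(A)∘v = 0` gives `P(S_i)∘1 = P(S_i) = 0`.
-/

section Intertwining

variable {M N : Type*} [Fintype M] [DecidableEq M] [Fintype N] [DecidableEq N]

lemma Matrix.mul_pow_of_mul_eq_mul {R : Type*} [Semiring R]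
    {X : Matrix M N R} {A : Matrix N N R} {B : Matrix M M R} (h : X * A = B * X) (k : ℕ) :
    X * A ^ k = B ^ k * X := by
  induction k with
  | zero => simp
  | succ k ih => rw [pow_succ, ← Matrix.mul_assoc, ih, Matrix.mul_assoc, h, ← Matrix.mul_assoc,
      ← pow_succ]

lemma mul_circ_of_mul_eq_mul {b : ℕ} {X : Matrix M N ℂ} {A : Matrix N N ℂ} {B : Matrix M M ℂ}
    (h : X * A = B * X) (P : Polynomial (Matrix (Fin b) (Fin b) ℂ)) (w : Matrix N (Fin b) ℂ) :
    X * circ A P w = circ B P (X * w) := by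
  simp only [circ, Polynomial.sum_def, Matrix.mul_sum, ← Matrix.mul_assoc,
    Matrix.mul_pow_of_mul_eq_mul h]

end Intertwining

lemma blockEval_eq_circ_one {b : ℕ} (S : Matrix (Fin b) (Fin b) ℂ)
    (P : Polynomial (Matrix (Fin b) (Fin b) ℂ)) : blockEval S P = circ S P 1 := by
  simp only [blockEval, circ, Matrix.mul_one]

section BlockRow

variable {d : ℕ}

def blockRowProj (b : ℕ) (i : Fin d) : Matrix (Fin b) (Fin b × Fin d) ℂ :=
  (1 : Matrix (Fin b × Fin d) (Fin b × Fin d) ℂ).submatrix (·, i) id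

lemma blockRowOf_eq_blockRowProj_mul {b : ℕ} (W : Matrix (Fin b × Fin d) (Fin b) ℂ) (i : Fin d) :
    blockRowOf W i = blockRowProj b i * W := by
  ext s t
  simp [blockRowOf, blockRowProj, Matrix.mul_apply, Matrix.one_apply]

lemma blockRowProj_mul_blockDiagonal {b : ℕ} (Θ : Fin d → Matrix (Fin b) (Fin b) ℂ) (i : Fin d) :
    blockRowProj b i * blockDiagonal Θ = Θ i * blockRowProj b i := by
  ext s ⟨t, j⟩
  by_cases hij : i = j
  · subst hij
    simp [blockRowProj, Matrix.mul_apply, Matrix.one_apply]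
  · simp [blockRowProj, Matrix.mul_apply, Matrix.one_apply, blockDiagonal_apply_ne _ _ _ hij, hij]

end BlockRow

theorem solvent_of_blockCharPoly_general {d b : ℕ}
    (A U : Matrix (Fin b × Fin d) (Fin b × Fin d) ℂ) (hU : IsUnit U.det)
    (Θ : Fin d → Matrix (Fin b) (Fin b) ℂ)
    (hA : A = U * Matrix.blockDiagonal Θ * U⁻¹)
    (v : Matrix (Fin b × Fin d) (Fin b) ℂ)
    (hW : ∀ i, IsUnit (blockRowOf (U⁻¹ * v) i))
    (S : Fin d → Matrix (Fin b) (Fin b) ℂ)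
    (hS : ∀ i, S i = (blockRowOf (U⁻¹ * v) i)⁻¹ * Θ i * blockRowOf (U⁻¹ * v) i)
    (P : Polynomial (Matrix (Fin b) (Fin b) ℂ))
    (hchar : circ A P v = 0) :
    ∀ i, blockEval (S i) P = 0 := by
  intro i
  set W := blockRowOf (U⁻¹ * v) i with hWdef
  have hWdet : IsUnit W.det := (Matrix.isUnit_iff_isUnit_det W).mp (hW i)
  have hUA : U⁻¹ * A = blockDiagonal Θ * U⁻¹ := by
    rw [hA, ← Matrix.mul_assoc, ← Matrix.mul_assoc, Matrix.nonsing_inv_mul U hU, Matrix.one_mul]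
  have hWS : W⁻¹ * Θ i = S i * W⁻¹ := by
    rw [hS i, Matrix.mul_assoc _ W, Matrix.mul_nonsing_inv W hWdet, Matrix.mul_one]
  have hT : circ (blockDiagonal Θ) P (U⁻¹ * v) = 0 := by
    rw [← mul_circ_of_mul_eq_mul hUA, hchar, Matrix.mul_zero]
  have hΘ : circ (Θ i) P W = 0 := by
    rw [hWdef, blockRowOf_eq_blockRowProj_mul,
      ← mul_circ_of_mul_eq_mul (blockRowProj_mul_blockDiagonal Θ i), hT, Matrix.mul_zero]
  rw [blockEval_eq_circ_one, ← Matrix.nonsing_inv_mul W hWdet, ← mul_circ_of_mul_eq_mul hWS, hΘ,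
    Matrix.mul_zero]

/-- If `A = U·diag(Θ_1,…,Θ_d)·U⁻¹` and the block rows `W_i` of `W = U⁻¹v` are invertible,
then each `S_i = W_i⁻¹ Θ_i W_i` is a left solvent of any monic block characteristic
polynomial of `A` with respect to `v`. -/
theorem solvent_of_blockCharPoly {d b : ℕ}
    (A U : Matrix (Fin b × Fin d) (Fin b × Fin d) ℂ) (hU : IsUnit U.det)
    (Θ : Fin d → Matrix (Fin b) (Fin b) ℂ)
    (hA : A = U * Matrix.blockDiagonal Θ * U⁻¹)
    (v : Matrix (Fin b × Fin d) (Fin b) ℂ)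
    (hW : ∀ i, IsUnit (blockRowOf (U⁻¹ * v) i))
    (S : Fin d → Matrix (Fin b) (Fin b) ℂ)
    (hS : ∀ i, S i = (blockRowOf (U⁻¹ * v) i)⁻¹ * Θ i * blockRowOf (U⁻¹ * v) i)
    (P : Polynomial (Matrix (Fin b) (Fin b) ℂ))
    (hmonic : P.Monic) (hdeg : P.natDegree = d) (hchar : circ A P v = 0) :
    ∀ i, blockEval (S i) P = 0 :=
  solvent_of_blockCharPoly_general A U hU Θ hA v hW S hS P hchar
end

section
/- Let A ∈ ℂ^{n×n}, v ∈ ℂ^{n×b}, and let γ be a compact positively oriented contour enclosing the eigenvalues of A once. Let R(z) = P(z)/Q(z) be a rational b×b matrix with det(R(z)) ≠ 0 for all z in the compact region enclosed by γ. Then (1/2πi) ∮_γ R(zI_n)∘^{-1}[(zI_n − A)^{-1} v] dz = R(A)∘^{-1} v. -/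
open Polynomial Matrix

open scoped Matrix.Norms.L2Operator

namespace CIAux

open Metric Set
set_option linter.unusedSectionVars false
set_option maxHeartbeats 1600000

/-! ### Circle integral helpers -/

variable {E F : Type*} [NormedAddCommGroup E] [NormedSpace ℂ E] [CompleteSpace E]
  [NormedAddCommGroup F] [NormedSpace ℂ F] [CompleteSpace F]

lemma circleIntegral_CLM (L : E →L[ℂ] F) {f : ℂ → E} {c : ℂ} {r : ℝ}
    (hf : CircleIntegrable f c r) :
    (∮ z in C(c, r), L (f z)) = L (∮ z in C(c, r), f z) := by
  unfold circleIntegral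
  rw [← L.intervalIntegral_comp_comm hf.out]
  congr 1
  funext θ
  rw [L.map_smul]

lemma circleIntegral_add {f g : ℂ → E} {c : ℂ} {r : ℝ}
    (hf : CircleIntegrable f c r) (hg : CircleIntegrable g c r) :
    (∮ z in C(c, r), (f z + g z)) = (∮ z in C(c, r), f z) + ∮ z in C(c, r), g z := by
  simp only [circleIntegral, smul_add, intervalIntegral.integral_add hf.out hg.out]

lemma circleIntegral_finset_sum {ι : Type*} (s : Finset ι) (f : ι → ℂ → E) {c : ℂ} {r : ℝ}
    (hf : ∀ i ∈ s, CircleIntegrable (f i) c r) :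
    (∮ z in C(c, r), (∑ i ∈ s, f i z)) = ∑ i ∈ s, ∮ z in C(c, r), f i z := by
  unfold circleIntegral
  rw [← intervalIntegral.integral_finset_sum fun i hi => (hf i hi).out]
  congr 1
  funext θ
  rw [Finset.smul_sum]

/-! ### Matrix multiplication as continuous linear maps -/

variable {p q s t : Type*} [Fintype p] [Fintype q] [Fintype s] [Fintype t]
  [DecidableEq p] [DecidableEq q] [DecidableEq s] [DecidableEq t]

/-- The continuous linear map `X ↦ C * X * Γ` on matrices. -/
noncomputable def mulCLM (C : Matrix p q ℂ) (Γ : Matrix s t ℂ) :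
    Matrix q s ℂ →L[ℂ] Matrix p t ℂ :=
  LinearMap.toContinuousLinearMap
    { toFun := fun X => C * X * Γ
      map_add' := fun X Y => by simp only [Matrix.mul_add, Matrix.add_mul]
      map_smul' := fun a X => by
        simp only [Matrix.mul_smul, Matrix.smul_mul, RingHom.id_apply] }

@[simp] lemma mulCLM_apply (C : Matrix p q ℂ) (Γ : Matrix s t ℂ) (X : Matrix q s ℂ) :
    mulCLM C Γ X = C * X * Γ := rfl

lemma circleIntegral_mul (C : Matrix p q ℂ) (Γ : Matrix s t ℂ) {f : ℂ → Matrix q s ℂ}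
    {c : ℂ} {r : ℝ} (hf : CircleIntegrable f c r) :
    (∮ z in C(c, r), C * f z * Γ) = C * (∮ z in C(c, r), f z) * Γ := by
  simpa using circleIntegral_CLM (mulCLM C Γ) hf

lemma circleIntegral_const_mul (C : Matrix p q ℂ) {f : ℂ → Matrix q s ℂ}
    {c : ℂ} {r : ℝ} (hf : CircleIntegrable f c r) :
    (∮ z in C(c, r), C * f z) = C * (∮ z in C(c, r), f z) := by
  have h1 : (∮ z in C(c, r), C * f z)
      = ∮ z in C(c, r), C * f z * (1 : Matrix s s ℂ) := by
    congr 1; funext z; rw [Matrix.mul_one]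
  rw [h1, circleIntegral_mul C (1 : Matrix s s ℂ) hf, Matrix.mul_one]

lemma circleIntegral_mul_const (Γ : Matrix q s ℂ) {f : ℂ → Matrix p q ℂ}
    {c : ℂ} {r : ℝ} (hf : CircleIntegrable f c r) :
    (∮ z in C(c, r), f z * Γ) = (∮ z in C(c, r), f z) * Γ := by
  have h1 : (∮ z in C(c, r), f z * Γ) = ∮ z in C(c, r), (1 : Matrix p p ℂ) * f z * Γ := by
    congr 1; funext z; rw [Matrix.one_mul]
  rw [h1, circleIntegral_mul 1 Γ hf, Matrix.one_mul]

lemma _root_.ContinuousAt.matmul {f : ℂ → Matrix p q ℂ} {g : ℂ → Matrix q s ℂ} {z : ℂ}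
    (hf : ContinuousAt f z) (hg : ContinuousAt g z) :
    ContinuousAt (fun z => f z * g z) z := by
  have hmul : Continuous (fun pq : Matrix p q ℂ × Matrix q s ℂ => pq.1 * pq.2) :=
    continuous_fst.matrix_mul continuous_snd
  exact hmul.continuousAt.comp (hf.prodMk hg)

/-! ### Basic lemmas about `matEval` and `circ` -/

variable {n b : ℕ}

lemma matEval_def (P : Polynomial (Matrix (Fin b) (Fin b) ℂ)) (z : ℂ) :
    matEval P z = ∑ i ∈ P.support, z ^ i • P.coeff i := by
  rw [matEval, Polynomial.sum_def]

lemma differentiable_matEval (P : Polynomial (Matrix (Fin b) (Fin b) ℂ)) :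
    Differentiable ℂ (matEval P) := by
  have h : matEval P = fun z => ∑ i ∈ P.support, z ^ i • P.coeff i :=
    funext fun z => matEval_def P z
  rw [h]
  exact Differentiable.fun_sum fun i _ => (differentiable_pow i).smul_const _

lemma circ_def (A : Matrix (Fin n) (Fin n) ℂ) (P : Polynomial (Matrix (Fin b) (Fin b) ℂ))
    (w : Matrix (Fin n) (Fin b) ℂ) :
    circ A P w = ∑ i ∈ P.support, A ^ i * w * P.coeff i := by
  rw [circ, Polynomial.sum_def]

lemma circ_smul_one (P : Polynomial (Matrix (Fin b) (Fin b) ℂ)) (z : ℂ)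
    (w : Matrix (Fin n) (Fin b) ℂ) :
    circ (z • (1 : Matrix (Fin n) (Fin n) ℂ)) P w = w * matEval P z := by
  rw [circ_def, matEval_def, Matrix.mul_sum]
  refine Finset.sum_congr rfl fun i _ => ?_
  rw [_root_.smul_pow, one_pow, Matrix.smul_mul, Matrix.smul_mul, Matrix.one_mul,
    Matrix.mul_smul]

/-- `circ A P` as a linear map. -/
noncomputable def circL (A : Matrix (Fin n) (Fin n) ℂ) (P : Polynomial (Matrix (Fin b) (Fin b) ℂ)) :
    Matrix (Fin n) (Fin b) ℂ →ₗ[ℂ] Matrix (Fin n) (Fin b) ℂ where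
  toFun := circ A P
  map_add' x y := by
    simp only [circ_def, Matrix.mul_add, Matrix.add_mul, Finset.sum_add_distrib]
  map_smul' a x := by
    simp only [circ_def, Matrix.mul_smul, Matrix.smul_mul, Finset.smul_sum, RingHom.id_apply]

lemma circ_smul (A : Matrix (Fin n) (Fin n) ℂ) (P : Polynomial (Matrix (Fin b) (Fin b) ℂ))
    (a : ℂ) (w : Matrix (Fin n) (Fin b) ℂ) : circ A P (a • w) = a • circ A P w :=
  (circL A P).map_smul a w

/-! ### Telescoping sums -/

/-- Partial geometric sum used in telescoping. -/
noncomputable def Tpow (A : Matrix (Fin n) (Fin n) ℂ) (i : ℕ) (z : ℂ) :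
    Matrix (Fin n) (Fin n) ℂ :=
  ∑ k ∈ Finset.range i, z ^ k • A ^ (i - 1 - k)

lemma Tpow_succ (A : Matrix (Fin n) (Fin n) ℂ) (i : ℕ) (z : ℂ) :
    Tpow A (i + 1) z = z ^ i • 1 + Tpow A i z * A := by
  rw [Tpow, Finset.sum_range_succ]
  have h1 : z ^ i • A ^ (i + 1 - 1 - i) = z ^ i • (1 : Matrix (Fin n) (Fin n) ℂ) := by
    norm_num
  have h2 : (∑ k ∈ Finset.range i, z ^ k • A ^ (i + 1 - 1 - k)) = Tpow A i z * A := by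
    rw [Tpow, Matrix.sum_mul]
    refine Finset.sum_congr rfl fun k hk => ?_
    have hk' : k < i := Finset.mem_range.mp hk
    have h : i + 1 - 1 - k = (i - 1 - k) + 1 := by omega
    rw [h, pow_succ, Matrix.smul_mul]
  rw [h1, h2]
  exact add_comm _ _

lemma Tpow_mul (A : Matrix (Fin n) (Fin n) ℂ) (i : ℕ) (z : ℂ) :
    Tpow A i z * (z • 1 - A) = z ^ i • 1 - A ^ i := by
  induction i with
  | zero => simp [Tpow]
  | succ i ih =>
    have hc : A * (z • (1 : Matrix (Fin n) (Fin n) ℂ) - A) = (z • 1 - A) * A := by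
      rw [Matrix.mul_sub, Matrix.sub_mul, Matrix.mul_smul, Matrix.smul_mul, Matrix.mul_one,
        Matrix.one_mul]
    have h1 : (z ^ i • (1 : Matrix (Fin n) (Fin n) ℂ)) * (z • 1 - A)
        = z ^ (i + 1) • 1 - z ^ i • A := by
      rw [Matrix.smul_mul, Matrix.one_mul, smul_sub, smul_smul, ← pow_succ]
    have h2 : Tpow A i z * A * (z • 1 - A) = z ^ i • A - A ^ (i + 1) := by
      rw [Matrix.mul_assoc, hc, ← Matrix.mul_assoc, ih, Matrix.sub_mul, Matrix.smul_mul,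
        Matrix.one_mul, ← pow_succ]
    rw [Tpow_succ, Matrix.add_mul, h1, h2, sub_add_sub_cancel]

lemma differentiable_Tpow (A : Matrix (Fin n) (Fin n) ℂ) (i : ℕ) :
    Differentiable ℂ (fun z => Tpow A i z) :=
  Differentiable.fun_sum fun k _ => (differentiable_pow k).smul_const _

/-- Matrix polynomial telescoping: `Q(z)•1 - Q(A) = SQ A Q z * (z•1 - A)`. -/
noncomputable def SQ (A : Matrix (Fin n) (Fin n) ℂ) (Q : Polynomial ℂ) (z : ℂ) :
    Matrix (Fin n) (Fin n) ℂ :=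
  ∑ j ∈ Q.support, Q.coeff j • Tpow A j z

lemma aeval_eq_support_sum (A : Matrix (Fin n) (Fin n) ℂ) (Q : Polynomial ℂ) :
    aeval A Q = ∑ j ∈ Q.support, Q.coeff j • A ^ j := by
  rw [aeval_def, eval₂_eq_sum, Polynomial.sum_def]
  exact Finset.sum_congr rfl fun j _ => by rw [← Algebra.smul_def]

lemma SQ_mul (A : Matrix (Fin n) (Fin n) ℂ) (Q : Polynomial ℂ) (z : ℂ) :
    SQ A Q z * (z • 1 - A) = Q.eval z • 1 - aeval A Q := by
  rw [SQ, Matrix.sum_mul]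
  have h : ∀ j ∈ Q.support,
      (Q.coeff j • Tpow A j z) * (z • 1 - A)
        = (Q.coeff j * z ^ j) • (1 : Matrix (Fin n) (Fin n) ℂ) - Q.coeff j • A ^ j := by
    intro j _
    rw [Matrix.smul_mul, Tpow_mul, smul_sub, smul_smul]
  rw [Finset.sum_congr rfl h, Finset.sum_sub_distrib]
  congr 1
  · rw [eval_eq_sum, Polynomial.sum_def, Finset.sum_smul]
  · exact (aeval_eq_support_sum A Q).symm

lemma aeval_smul_one (Q : Polynomial ℂ) (z : ℂ) :
    aeval (z • (1 : Matrix (Fin n) (Fin n) ℂ)) Q = Q.eval z • 1 := by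
  rw [← Algebra.algebraMap_eq_smul_one, aeval_algebraMap_apply_eq_algebraMap_eval,
    Algebra.algebraMap_eq_smul_one]

lemma isUnit_of_notMem_spectrum {A : Matrix (Fin n) (Fin n) ℂ} {z : ℂ}
    (h : z ∉ spectrum ℂ A) : IsUnit (z • (1 : Matrix (Fin n) (Fin n) ℂ) - A) := by
  rw [spectrum.mem_iff, not_not] at h
  simpa [Algebra.algebraMap_eq_smul_one] using h

lemma q_smul_resolvent {A : Matrix (Fin n) (Fin n) ℂ} {z : ℂ} (Q : Polynomial ℂ)
    (h : IsUnit (z • (1 : Matrix (Fin n) (Fin n) ℂ) - A)) :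
    Q.eval z • (z • 1 - A)⁻¹ = aeval A Q * (z • 1 - A)⁻¹ + SQ A Q z := by
  have hd : IsUnit (z • (1 : Matrix (Fin n) (Fin n) ℂ) - A).det :=
    (Matrix.isUnit_iff_isUnit_det _).mp h
  have h1 : (Q.eval z • (1 : Matrix (Fin n) (Fin n) ℂ)) * (z • 1 - A)⁻¹
      = (aeval A Q + SQ A Q z * (z • 1 - A)) * (z • 1 - A)⁻¹ := by
    congr 1
    rw [SQ_mul A Q z]
    abel
  rw [Matrix.smul_mul, Matrix.one_mul] at h1
  rw [h1, Matrix.add_mul, Matrix.mul_assoc, Matrix.mul_nonsing_inv _ hd, Matrix.mul_one]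

lemma pow_mul_resolvent {A : Matrix (Fin n) (Fin n) ℂ} {z : ℂ} (i : ℕ)
    (h : IsUnit (z • (1 : Matrix (Fin n) (Fin n) ℂ) - A)) :
    A ^ i * (z • 1 - A)⁻¹ = z ^ i • (z • 1 - A)⁻¹ - Tpow A i z := by
  have hd : IsUnit (z • (1 : Matrix (Fin n) (Fin n) ℂ) - A).det :=
    (Matrix.isUnit_iff_isUnit_det _).mp h
  have h0 : A ^ i = z ^ i • (1 : Matrix (Fin n) (Fin n) ℂ) - Tpow A i z * (z • 1 - A) := by
    rw [Tpow_mul, sub_sub_cancel]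
  rw [h0, Matrix.sub_mul, Matrix.smul_mul, Matrix.one_mul, Matrix.mul_assoc,
    Matrix.mul_nonsing_inv _ hd, Matrix.mul_one]

/-! ### The resolvent contour integral -/

lemma resolvent_integral (A : Matrix (Fin n) (Fin n) ℂ) {c : ℂ} {r : ℝ} (hr : 0 < r)
    (hspec : spectrum ℂ A ⊆ ball c r) :
    (∮ z in C(c, r), (z • (1 : Matrix (Fin n) (Fin n) ℂ) - A)⁻¹)
      = (2 * Real.pi * Complex.I : ℂ) • 1 := by
  rcases Nat.eq_zero_or_pos n with h0 | hn
  · subst h0; exact Subsingleton.elim _ _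
  haveI : NeZero n := ⟨hn.ne'⟩
  set res : ℂ → Matrix (Fin n) (Fin n) ℂ := fun z => (z • 1 - A)⁻¹ with hresdef
  have hunit : ∀ z : ℂ, r ≤ dist z c → IsUnit (z • (1 : Matrix (Fin n) (Fin n) ℂ) - A) := by
    intro z hz
    refine isUnit_of_notMem_spectrum fun hmem => ?_
    have := hspec hmem
    rw [mem_ball] at this
    linarith
  have hdiff : ∀ z : ℂ, IsUnit (z • (1 : Matrix (Fin n) (Fin n) ℂ) - A) →
      DifferentiableAt ℂ res z := by
    intro z hz
    have hre : res = fun z => Ring.inverse (z • (1 : Matrix (Fin n) (Fin n) ℂ) - A) :=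
      funext fun z => Matrix.nonsing_inv_eq_ringInverse _
    rw [hre]
    exact ((differentiableAt_id.smul_const _).sub_const A).inverse hz
  have hcont : ∀ ρ : ℝ, 0 < ρ → r ≤ ρ → CircleIntegrable res c ρ := by
    intro ρ hρ0 hρ
    refine ContinuousOn.circleIntegrable hρ0.le fun z hz => ?_
    have hz' : r ≤ dist z c := by rw [mem_sphere] at hz; rw [hz]; exact hρ
    exact (hdiff z (hunit z hz')).continuousAt.continuousWithinAt
  have hconst : ∀ ρ : ℝ, r ≤ ρ → (∮ z in C(c, ρ), res z) = ∮ z in C(c, r), res z := by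
    intro ρ hρ
    refine Complex.circleIntegral_eq_of_differentiable_on_annulus_off_countable hr hρ
      Set.countable_empty ?_ ?_
    · intro z hz
      have hz' : r ≤ dist z c := by
        have := hz.2
        rw [mem_ball, not_lt] at this
        exact this
      exact (hdiff z (hunit z hz')).continuousAt.continuousWithinAt
    · intro z hz
      have hz' : r ≤ dist z c := by
        have := hz.1.2
        rw [mem_closedBall, not_le] at this
        linarith
      exact hdiff z (hunit z hz')
  set D : ℝ := ‖A - c • (1 : Matrix (Fin n) (Fin n) ℂ)‖ with hDdef
  have hD0 : 0 ≤ D := norm_nonneg _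
  set X := (∮ z in C(c, r), res z) - (2 * Real.pi * Complex.I : ℂ) • 1 with hXdef
  have key : ∀ ρ : ℝ, max r (2 * D + 1) ≤ ρ → ‖X‖ ≤ 4 * Real.pi * D / ρ := by
    intro ρ hρ
    have hρr : r ≤ ρ := le_trans (le_max_left _ _) hρ
    have hρD : 2 * D + 1 ≤ ρ := le_trans (le_max_right _ _) hρ
    have hρ0 : 0 < ρ := by linarith
    have hbound : ∀ z ∈ sphere c ρ, ‖res z - (z - c)⁻¹ • 1‖ ≤ 2 * D / ρ ^ 2 := by
      intro z hz
      rw [mem_sphere, Complex.dist_eq] at hz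
      set u : ℂ := z - c with hudef
      have hu : ‖u‖ = ρ := hz
      have hu0 : u ≠ 0 := by
        intro h
        rw [h, norm_zero] at hu
        linarith
      set B : Matrix (Fin n) (Fin n) ℂ := u⁻¹ • (A - c • 1) with hBdef
      have hB : ‖B‖ ≤ D / ρ := by
        rw [hBdef, norm_smul, norm_inv, hu]
        rw [div_eq_inv_mul]
      have hBhalf : ‖B‖ ≤ 1 / 2 := by
        refine le_trans hB ?_
        rw [div_le_div_iff₀ hρ0 (by norm_num)]
        linarith
      have hB1 : ‖B‖ < 1 := lt_of_le_of_lt hBhalf (by norm_num)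
      have hVunit : IsUnit ((1 : Matrix (Fin n) (Fin n) ℂ) - B) :=
        isUnit_one_sub_of_norm_lt_one hB1
      set V : Matrix (Fin n) (Fin n) ℂ := Ring.inverse (1 - B) with hVdef
      have hfact : z • (1 : Matrix (Fin n) (Fin n) ℂ) - A = u • (1 - B) := by
        have h1 : u • B = A - c • 1 := by
          rw [hBdef, smul_smul, mul_inv_cancel₀ hu0, one_smul]
        rw [smul_sub, h1, hudef, sub_smul]
        abel
      have hinv : res z = u⁻¹ • V := by
        refine Matrix.inv_eq_right_inv ?_
        rw [hfact, Matrix.smul_mul, Matrix.mul_smul, smul_smul, mul_inv_cancel₀ hu0,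
          one_smul, Ring.mul_inverse_cancel _ hVunit]
      have hVbound : ‖V‖ ≤ 2 := by
        rw [hVdef, ← geom_series_eq_inverse B hB1]
        refine le_trans (tsum_geometric_le_of_norm_lt_one B hB1) ?_
        rw [norm_one]
        have h2 : (2 : ℝ)⁻¹ ≤ 1 - ‖B‖ := by
          have := hBhalf
          rw [one_div] at this
          linarith
        have := inv_anti₀ (by norm_num : (0:ℝ) < 2⁻¹) h2
        rw [inv_inv] at this
        linarith
      have hV1 : V - 1 = V * B := by
        have h := Ring.inverse_mul_cancel _ hVunit
        rw [← hVdef] at h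
        rw [mul_sub, mul_one] at h
        rw [← h]; abel
      have heq : res z - (z - c)⁻¹ • 1 = u⁻¹ • (V * B) := by
        rw [hinv, ← hudef, ← smul_sub, ← hV1]
      rw [heq, norm_smul, norm_inv, hu]
      have hVB : ‖V * B‖ ≤ 2 * (D / ρ) := by
        refine le_trans (norm_mul_le V B) ?_
        exact mul_le_mul hVbound hB (norm_nonneg _) (by norm_num)
      calc ρ⁻¹ * ‖V * B‖ ≤ ρ⁻¹ * (2 * (D / ρ)) := by
            exact mul_le_mul_of_nonneg_left hVB (by positivity)
        _ = 2 * D / ρ ^ 2 := by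
            rw [sq, div_eq_mul_inv, div_eq_mul_inv, mul_inv]
            ring
    have hint2 : CircleIntegrable (fun z => (z - c)⁻¹ • (1 : Matrix (Fin n) (Fin n) ℂ)) c ρ := by
      refine ContinuousOn.circleIntegrable hρ0.le fun z hz => ?_
      rw [mem_sphere] at hz
      have hz0 : z - c ≠ 0 := by
        intro h
        rw [sub_eq_zero] at h
        subst h
        simp at hz
        linarith
      exact (((continuousAt_id.sub continuousAt_const).inv₀ hz0).smul
        continuousAt_const).continuousWithinAt
    have hre : X = ∮ z in C(c, ρ), (res z - (z - c)⁻¹ • 1) := by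
      rw [circleIntegral.integral_sub (hcont ρ hρ0 hρr) hint2, hXdef, ← hconst ρ hρr]
      congr 1
      rw [circleIntegral.integral_smul_const,
        circleIntegral.integral_sub_inv_of_mem_ball (mem_ball_self hρ0)]
    rw [hre]
    have hnorm := circleIntegral.norm_integral_le_of_norm_le_const (c := c) hρ0.le hbound
    have hρne : ρ ≠ 0 := hρ0.ne'
    refine le_trans hnorm (le_of_eq ?_)
    field_simp
    ring
  have htend : Filter.Tendsto (fun ρ : ℝ => 4 * Real.pi * D / ρ) Filter.atTop (nhds 0) :=
    Filter.Tendsto.div_atTop tendsto_const_nhds Filter.tendsto_id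
  have hev : ∀ᶠ ρ in Filter.atTop, ‖X‖ ≤ 4 * Real.pi * D / ρ :=
    Filter.eventually_atTop.mpr ⟨max r (2 * D + 1), key⟩
  have hX0 : ‖X‖ ≤ 0 := ge_of_tendsto htend hev
  have hXz : X = 0 := by
    rw [← norm_le_zero_iff]
    exact hX0
  rw [hXdef, sub_eq_zero] at hXz
  exact hXz

/-! ### Invertibility and differentiability of `matEval P` -/

lemma isUnit_matEval {P : Polynomial (Matrix (Fin b) (Fin b) ℂ)} {Q : Polynomial ℂ} {z : ℂ}
    (hQ : Q.eval z ≠ 0) (hdet : (ratEval P Q z).det ≠ 0) : IsUnit (matEval P z) := by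
  rw [Matrix.isUnit_iff_isUnit_det, isUnit_iff_ne_zero]
  intro h0
  apply hdet
  rw [ratEval, Matrix.det_smul, h0, mul_zero]

lemma circInv_smul_one {P : Polynomial (Matrix (Fin b) (Fin b) ℂ)} {z : ℂ}
    (hu : IsUnit (matEval P z)) (u : Matrix (Fin n) (Fin b) ℂ) :
    circInv (z • (1 : Matrix (Fin n) (Fin n) ℂ)) P u = u * (matEval P z)⁻¹ := by
  have hd : IsUnit (matEval P z).det := (Matrix.isUnit_iff_isUnit_det _).mp hu
  have hex : ∃! w : Matrix (Fin n) (Fin b) ℂ,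
      circ (z • (1 : Matrix (Fin n) (Fin n) ℂ)) P w = u := by
    refine ⟨u * (matEval P z)⁻¹, ?_, ?_⟩
    · show circ (z • (1 : Matrix (Fin n) (Fin n) ℂ)) P (u * (matEval P z)⁻¹) = u
      rw [circ_smul_one, Matrix.mul_assoc, Matrix.nonsing_inv_mul _ hd, Matrix.mul_one]
    · intro w hw
      rw [circ_smul_one] at hw
      rw [← hw, Matrix.mul_assoc, Matrix.mul_nonsing_inv _ hd, Matrix.mul_one]
  have hsol : circ (z • (1 : Matrix (Fin n) (Fin n) ℂ)) P (u * (matEval P z)⁻¹) = u := by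
    rw [circ_smul_one, Matrix.mul_assoc, Matrix.nonsing_inv_mul _ hd, Matrix.mul_one]
  rw [circInv, dif_pos hex]
  exact (hex.choose_spec.2 _ hsol).symm

lemma diffAt_inv_matEval (P : Polynomial (Matrix (Fin b) (Fin b) ℂ)) {z : ℂ}
    (hz : IsUnit (matEval P z)) :
    DifferentiableAt ℂ (fun z => (matEval P z)⁻¹) z := by
  have h : (fun z => (matEval P z)⁻¹) = fun z => Ring.inverse (matEval P z) :=
    funext fun z => Matrix.nonsing_inv_eq_ringInverse _
  rw [h]
  exact ((differentiable_matEval P) z).inverse hz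

lemma diffAt_CmulInv (P : Polynomial (Matrix (Fin b) (Fin b) ℂ))
    (C : Matrix (Fin n) (Fin b) ℂ) {z : ℂ} (hz : IsUnit (matEval P z)) :
    DifferentiableAt ℂ (fun z => C * (matEval P z)⁻¹) z := by
  have h : (fun z => C * (matEval P z)⁻¹)
      = fun z => mulCLM C (1 : Matrix (Fin b) (Fin b) ℂ) ((matEval P z)⁻¹) := by
    funext z; rw [mulCLM_apply, Matrix.mul_one]
  rw [h]
  exact ((mulCLM C (1 : Matrix (Fin b) (Fin b) ℂ)).differentiable.differentiableAt).comp z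
    (diffAt_inv_matEval P hz)

lemma diffAt_CmulInvGamma (P : Polynomial (Matrix (Fin b) (Fin b) ℂ))
    (C : Matrix (Fin n) (Fin b) ℂ) (Γ : Matrix (Fin b) (Fin b) ℂ) {z : ℂ}
    (hz : IsUnit (matEval P z)) :
    DifferentiableAt ℂ (fun z => C * (matEval P z)⁻¹ * Γ) z := by
  have h : (fun z => C * (matEval P z)⁻¹ * Γ) = fun z => mulCLM C Γ ((matEval P z)⁻¹) := by
    funext z; rw [mulCLM_apply]
  rw [h]
  exact ((mulCLM C Γ).differentiable.differentiableAt).comp z (diffAt_inv_matEval P hz)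

/-- The key surjectivity step: the contour integral
`(2πi)⁻¹ ∮ (z•1-A)⁻¹ u (matEval P z)⁻¹ dz` is a `circ A P`-preimage of `u`. -/
lemma circ_contour (A : Matrix (Fin n) (Fin n) ℂ) (P : Polynomial (Matrix (Fin b) (Fin b) ℂ))
    {c : ℂ} {r : ℝ} (hr : 0 < r) (hspec : spectrum ℂ A ⊆ ball c r)
    (hM : ∀ z ∈ closedBall c r, IsUnit (matEval P z))
    (u : Matrix (Fin n) (Fin b) ℂ) :
    circ A P ((2 * Real.pi * Complex.I : ℂ)⁻¹ •
      ∮ z in C(c, r), (z • (1 : Matrix (Fin n) (Fin n) ℂ) - A)⁻¹ * u * (matEval P z)⁻¹) = u := by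
  classical
  set Rz : ℂ → Matrix (Fin n) (Fin n) ℂ := fun z => (z • 1 - A)⁻¹ with hRzdef
  set Minv : ℂ → Matrix (Fin b) (Fin b) ℂ := fun z => (matEval P z)⁻¹ with hMinvdef
  set Fu : ℂ → Matrix (Fin n) (Fin b) ℂ := fun z => Rz z * u * Minv z with hFudef
  have hsphsub : sphere c r ⊆ closedBall c r := sphere_subset_closedBall
  have hrs : ∀ z ∈ sphere c r, IsUnit (z • (1 : Matrix (Fin n) (Fin n) ℂ) - A) := by
    intro z hz
    refine isUnit_of_notMem_spectrum fun hmem => ?_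
    have h1 := hspec hmem
    rw [mem_ball] at h1
    rw [mem_sphere] at hz
    rw [hz] at h1
    exact lt_irrefl _ h1
  have hRzcont : ∀ z ∈ sphere c r, ContinuousAt Rz z := by
    intro z hz
    have hre : Rz = fun z => Ring.inverse (z • (1 : Matrix (Fin n) (Fin n) ℂ) - A) :=
      funext fun z => Matrix.nonsing_inv_eq_ringInverse _
    rw [hre]
    have hd : DifferentiableAt ℂ
        (fun w : ℂ => Ring.inverse (w • (1 : Matrix (Fin n) (Fin n) ℂ) - A)) z :=
      ((differentiableAt_id.smul_const (1 : Matrix (Fin n) (Fin n) ℂ)).sub_const A).inverse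
        (hrs z hz)
    exact hd.continuousAt
  have hMinvcont : ∀ z ∈ closedBall c r, ContinuousAt Minv z := fun z hz =>
    (diffAt_inv_matEval P (hM z hz)).continuousAt
  have hFucont : ContinuousOn Fu (sphere c r) := by
    intro z hz
    exact (((hRzcont z hz).matmul continuousAt_const).matmul
      (hMinvcont z (hsphsub hz))).continuousWithinAt
  have hFuint : CircleIntegrable Fu c r := hFucont.circleIntegrable hr.le
  have hRzint : CircleIntegrable Rz c r :=
    ContinuousOn.circleIntegrable hr.le fun z hz => (hRzcont z hz).continuousWithinAt
  have hterm_int : ∀ (i : ℕ) (Γ : Matrix (Fin b) (Fin b) ℂ),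
      CircleIntegrable (fun z => A ^ i * Fu z * Γ) c r := fun i Γ =>
    ContinuousOn.circleIntegrable hr.le
      ((mulCLM (A ^ i) Γ).continuous.comp_continuousOn hFucont)
  set HH : ℂ → Matrix (Fin n) (Fin b) ℂ :=
    fun z => ∑ i ∈ P.support, Tpow A i z * (u * Minv z) * P.coeff i with hHHdef
  have hHHdiff : ∀ z ∈ closedBall c r, DifferentiableAt ℂ HH z := by
    intro z hz
    have hexp : HH = fun w => ∑ i ∈ P.support, ∑ k ∈ Finset.range i,
        w ^ k • (A ^ (i - 1 - k) * u * (matEval P w)⁻¹ * P.coeff i) := by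
      funext w
      refine Finset.sum_congr rfl fun i _ => ?_
      rw [Tpow, Matrix.sum_mul, Matrix.sum_mul]
      refine Finset.sum_congr rfl fun k _ => ?_
      rw [Matrix.smul_mul, Matrix.smul_mul]
      rw [hMinvdef]
      simp only [Matrix.mul_assoc]
    rw [hexp]
    refine DifferentiableAt.fun_sum fun i _ => DifferentiableAt.fun_sum fun k _ => ?_
    exact (differentiableAt_pow k).smul
      (diffAt_CmulInvGamma P (A ^ (i - 1 - k) * u) (P.coeff i) (hM z hz))
  have hHHcont : ContinuousOn HH (sphere c r) := fun z hz =>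
    ((hHHdiff z (hsphsub hz)).continuousAt).continuousWithinAt
  have hHHint : CircleIntegrable HH c r := hHHcont.circleIntegrable hr.le
  have hHH0 : (∮ z in C(c, r), HH z) = 0 :=
    Complex.circleIntegral_eq_zero_of_differentiable_on_off_countable hr.le Set.countable_empty
      (fun z hz => (hHHdiff z hz).continuousAt.continuousWithinAt)
      (fun z hz => hHHdiff z (ball_subset_closedBall hz.1))
  have hpt : Set.EqOn (fun z => ∑ i ∈ P.support, A ^ i * Fu z * P.coeff i)
      (fun z => Rz z * u - HH z) (sphere c r) := by
    intro z hz
    have hu' := hrs z hz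
    have hdet' : IsUnit (matEval P z).det :=
      (Matrix.isUnit_iff_isUnit_det _).mp (hM z (hsphsub hz))
    simp only
    have h1 : ∀ i ∈ P.support, A ^ i * Fu z * P.coeff i
        = z ^ i • (Rz z * (u * Minv z) * P.coeff i)
          - Tpow A i z * (u * Minv z) * P.coeff i := by
      intro i _
      have hstep : A ^ i * Fu z = (z ^ i • Rz z - Tpow A i z) * (u * Minv z) := by
        rw [hFudef]
        simp only
        calc A ^ i * (Rz z * u * Minv z) = A ^ i * Rz z * (u * Minv z) := by
              simp only [Matrix.mul_assoc]
          _ = (z ^ i • Rz z - Tpow A i z) * (u * Minv z) := by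
              rw [pow_mul_resolvent i hu']
      rw [hstep, Matrix.sub_mul, Matrix.sub_mul, Matrix.smul_mul, Matrix.smul_mul]
    rw [Finset.sum_congr rfl h1, Finset.sum_sub_distrib]
    congr 1
    have h2 : ∀ i ∈ P.support, z ^ i • (Rz z * (u * Minv z) * P.coeff i)
        = (Rz z * (u * Minv z)) * (z ^ i • P.coeff i) := by
      intro i _
      rw [Matrix.mul_smul]
    rw [Finset.sum_congr rfl h2, ← Matrix.mul_sum, ← matEval_def]
    rw [Matrix.mul_assoc (Rz z) (u * Minv z) (matEval P z),
      Matrix.mul_assoc u (Minv z) (matEval P z), hMinvdef]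
    simp only
    rw [Matrix.nonsing_inv_mul _ hdet', Matrix.mul_one]
  have hRu_int : CircleIntegrable (fun z => Rz z * u) c r :=
    ContinuousOn.circleIntegrable hr.le fun z hz =>
      ((hRzcont z hz).matmul continuousAt_const).continuousWithinAt
  calc circ A P ((2 * Real.pi * Complex.I : ℂ)⁻¹ • ∮ z in C(c, r), Fu z)
      = (2 * Real.pi * Complex.I : ℂ)⁻¹ • circ A P (∮ z in C(c, r), Fu z) :=
        circ_smul A P _ _
    _ = (2 * Real.pi * Complex.I : ℂ)⁻¹ •
          ∑ i ∈ P.support, A ^ i * (∮ z in C(c, r), Fu z) * P.coeff i := by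
        rw [circ_def]
    _ = (2 * Real.pi * Complex.I : ℂ)⁻¹ •
          ∑ i ∈ P.support, ∮ z in C(c, r), (A ^ i * Fu z * P.coeff i) := by
        congr 1
        exact Finset.sum_congr rfl fun i _ => (circleIntegral_mul _ _ hFuint).symm
    _ = (2 * Real.pi * Complex.I : ℂ)⁻¹ •
          ∮ z in C(c, r), (∑ i ∈ P.support, A ^ i * Fu z * P.coeff i) := by
        rw [circleIntegral_finset_sum _ _ fun i _ => hterm_int i _]
    _ = (2 * Real.pi * Complex.I : ℂ)⁻¹ • ∮ z in C(c, r), (Rz z * u - HH z) := by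
        rw [circleIntegral.integral_congr hr.le hpt]
    _ = (2 * Real.pi * Complex.I : ℂ)⁻¹ •
          ((∮ z in C(c, r), Rz z * u) - ∮ z in C(c, r), HH z) := by
        rw [circleIntegral.integral_sub hRu_int hHHint]
    _ = (2 * Real.pi * Complex.I : ℂ)⁻¹ • ((∮ z in C(c, r), Rz z) * u) := by
        rw [hHH0, sub_zero, circleIntegral_mul_const u hRzint]
    _ = (2 * Real.pi * Complex.I : ℂ)⁻¹ • (((2 * Real.pi * Complex.I : ℂ) • (1 : Matrix (Fin n) (Fin n) ℂ)) * u) := by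
        rw [hRzdef]
        rw [resolvent_integral A hr hspec]
    _ = u := by
        rw [Matrix.smul_mul, Matrix.one_mul, smul_smul,
          inv_mul_cancel₀ Complex.two_pi_I_ne_zero, one_smul]

end CIAux

open Metric in
/-- Generalized Cauchy integral formula: integrating `R(zI)∘⁻¹[(zI−A)⁻¹v]` along a circle
enclosing the spectrum of `A`, on which `R` is nonsingular, yields `R(A)∘⁻¹v`. -/
theorem circleIntegral_ratCircInv_resolvent {n b : ℕ}
    (A : Matrix (Fin n) (Fin n) ℂ) (v : Matrix (Fin n) (Fin b) ℂ)
    (P : Polynomial (Matrix (Fin b) (Fin b) ℂ)) (Q : Polynomial ℂ)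
    (c : ℂ) (r : ℝ) (hr : 0 < r)
    (hspec : spectrum ℂ A ⊆ Metric.ball c r)
    (hR : ∀ z ∈ Metric.closedBall c r, Q.eval z ≠ 0 ∧ (ratEval P Q z).det ≠ 0) :
    (2 * Real.pi * Complex.I)⁻¹ •
        (∮ z in C(c, r),
          ratCircInv (z • (1 : Matrix (Fin n) (Fin n) ℂ)) P Q
            ((z • (1 : Matrix (Fin n) (Fin n) ℂ) - A)⁻¹ * v))
      = ratCircInv A P Q v := by
  classical
  have hM : ∀ z ∈ Metric.closedBall c r, IsUnit (matEval P z) := fun z hz =>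
    CIAux.isUnit_matEval (hR z hz).1 (hR z hz).2
  set Ff : ℂ → Matrix (Fin n) (Fin b) ℂ :=
    fun z => (z • (1 : Matrix (Fin n) (Fin n) ℂ) - A)⁻¹ * v * (matEval P z)⁻¹ with hFfdef
  set w0 : Matrix (Fin n) (Fin b) ℂ :=
    (2 * Real.pi * Complex.I : ℂ)⁻¹ • ∮ z in C(c, r), Ff z with hw0def
  have hw0key : circ A P w0 = v := CIAux.circ_contour A P hr hspec hM v
  have hsurj : Function.Surjective (CIAux.circL A P) := fun u =>
    ⟨_, CIAux.circ_contour A P hr hspec hM u⟩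
  have hinj : Function.Injective (CIAux.circL A P) :=
    LinearMap.injective_iff_surjective.mpr hsurj
  have hex : ∃! w : Matrix (Fin n) (Fin b) ℂ, circ A P w = v :=
    ⟨w0, hw0key, fun y hy =>
      hinj (show CIAux.circL A P y = CIAux.circL A P w0 from hy.trans hw0key.symm)⟩
  have hcinv : circInv A P v = w0 := by
    rw [circInv, dif_pos hex]
    exact (hex.choose_spec.2 _ hw0key).symm
  -- units on the sphere
  have hsphsub : sphere c r ⊆ closedBall c r := sphere_subset_closedBall
  have hrs : ∀ z ∈ sphere c r, IsUnit (z • (1 : Matrix (Fin n) (Fin n) ℂ) - A) := by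
    intro z hz
    refine CIAux.isUnit_of_notMem_spectrum fun hmem => ?_
    have h1 := hspec hmem
    rw [mem_ball] at h1
    rw [mem_sphere] at hz
    rw [hz] at h1
    exact lt_irrefl _ h1
  -- continuity of Ff on the sphere
  have hRzcont : ∀ z ∈ sphere c r,
      ContinuousAt (fun w : ℂ => (w • (1 : Matrix (Fin n) (Fin n) ℂ) - A)⁻¹) z := by
    intro z hz
    have hre : (fun w : ℂ => (w • (1 : Matrix (Fin n) (Fin n) ℂ) - A)⁻¹)
        = fun w : ℂ => Ring.inverse (w • (1 : Matrix (Fin n) (Fin n) ℂ) - A) :=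
      funext fun w => Matrix.nonsing_inv_eq_ringInverse _
    rw [hre]
    have hd : DifferentiableAt ℂ
        (fun w : ℂ => Ring.inverse (w • (1 : Matrix (Fin n) (Fin n) ℂ) - A)) z :=
      ((differentiableAt_id.smul_const (1 : Matrix (Fin n) (Fin n) ℂ)).sub_const A).inverse
        (hrs z hz)
    exact hd.continuousAt
  have hFfcontAt : ∀ z ∈ sphere c r, ContinuousAt Ff z := by
    intro z hz
    exact ((hRzcont z hz).matmul continuousAt_const).matmul
      (CIAux.diffAt_inv_matEval P (hM z (hsphsub hz))).continuousAt
  have hFfcont : ContinuousOn Ff (sphere c r) := fun z hz =>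
    (hFfcontAt z hz).continuousWithinAt
  have hFfint : CircleIntegrable Ff c r := hFfcont.circleIntegrable hr.le
  have hQAint : CircleIntegrable (fun z => aeval A Q * Ff z) c r :=
    ContinuousOn.circleIntegrable hr.le fun z hz =>
      (continuousAt_const.matmul (hFfcontAt z hz)).continuousWithinAt
  -- the auxiliary holomorphic part
  set g1 : ℂ → Matrix (Fin n) (Fin b) ℂ :=
    fun z => CIAux.SQ A Q z * (v * (matEval P z)⁻¹) with hg1def
  have hg1diff : ∀ z ∈ closedBall c r, DifferentiableAt ℂ g1 z := by
    intro z hz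
    have hexp : g1 = fun w => ∑ j ∈ Q.support, Q.coeff j •
        (∑ k ∈ Finset.range j, w ^ k • (A ^ (j - 1 - k) * v * (matEval P w)⁻¹)) := by
      funext w
      rw [hg1def]
      simp only
      rw [CIAux.SQ, Matrix.sum_mul]
      refine Finset.sum_congr rfl fun j _ => ?_
      rw [Matrix.smul_mul, CIAux.Tpow, Matrix.sum_mul]
      congr 1
      refine Finset.sum_congr rfl fun k _ => ?_
      rw [Matrix.smul_mul]
      simp only [Matrix.mul_assoc]
    rw [hexp]
    refine DifferentiableAt.fun_sum fun j _ => DifferentiableAt.fun_const_smul ?_ _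
    refine DifferentiableAt.fun_sum fun k _ => ?_
    exact (differentiableAt_pow k).smul
      (CIAux.diffAt_CmulInv P (A ^ (j - 1 - k) * v) (hM z hz))
  have hg1cont : ContinuousOn g1 (sphere c r) := fun z hz =>
    ((hg1diff z (hsphsub hz)).continuousAt).continuousWithinAt
  have hg1int : CircleIntegrable g1 c r := hg1cont.circleIntegrable hr.le
  have hg10 : (∮ z in C(c, r), g1 z) = 0 :=
    Complex.circleIntegral_eq_zero_of_differentiable_on_off_countable hr.le Set.countable_empty
      (fun z hz => (hg1diff z hz).continuousAt.continuousWithinAt)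
      (fun z hz => hg1diff z (ball_subset_closedBall hz.1))
  -- pointwise identity for the integrand
  have hEq : Set.EqOn
      (fun z => ratCircInv (z • (1 : Matrix (Fin n) (Fin n) ℂ)) P Q
        ((z • (1 : Matrix (Fin n) (Fin n) ℂ) - A)⁻¹ * v))
      (fun z => aeval A Q * Ff z + g1 z) (sphere c r) := by
    intro z hz
    have hu := hM z (hsphsub hz)
    have hru := hrs z hz
    simp only
    rw [ratCircInv, CIAux.aeval_smul_one, CIAux.circInv_smul_one hu,
      Matrix.smul_mul, Matrix.one_mul]
    rw [Matrix.mul_assoc ((z • (1 : Matrix (Fin n) (Fin n) ℂ) - A)⁻¹) v ((matEval P z)⁻¹),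
      ← Matrix.smul_mul, CIAux.q_smul_resolvent Q hru, Matrix.add_mul,
      Matrix.mul_assoc (aeval A Q)]
    congr 1
    rw [hFfdef]
    simp only
    rw [Matrix.mul_assoc]
  rw [circleIntegral.integral_congr hr.le hEq,
    CIAux.circleIntegral_add hQAint hg1int, hg10, add_zero,
    CIAux.circleIntegral_const_mul (aeval A Q) hFfint]
  rw [ratCircInv, hcinv, hw0def, Matrix.mul_smul]
end

section
/- Let AV_{k+1}K̲_k = V_{k+1}H̲_k be a block rational Arnoldi decomposition whose k-th (last) pole is infinite, i.e., the last b×b block row of K̲_k vanishes. Then the leading bk×bk principal submatrix K_k of K̲_k is invertible and the projected matrix satisfies V_k^H A V_k = H_k K_k^{-1}, where V_k consists of the first bk columns of V_{k+1} and H_k is the leading bk×bk principal submatrix of H̲_k. -/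
/-!
Orthonormality turns the decomposition into `H̲ = V_{k+1}ᴴ A V_{k+1} K̲`, so a kernel vector of
`K̲` is also one of `H̲`, and the block Hessenberg structure with one invertible subdiagonal block
per column leaves no nonzero common kernel vector. Since the last block row of `K̲` vanishes,
`K_k x = 0` forces `K̲ x = 0`, so `K_k` is invertible; moreover `V_{k+1} K̲ = V_k K_k`, and
multiplying `A V_k K_k = V_{k+1} H̲` on the left by `V_kᴴ` gives `V_kᴴ A V_k K_k = H_k`.
-/

open Matrix

/-- The `i`-th subdiagonal `b×b` block of a `b(k+1) × bk` block matrix. -/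
def subBlk {k b : ℕ} (K : Matrix (Fin (k + 1) × Fin b) (Fin k × Fin b) ℂ) (i : Fin k) :
    Matrix (Fin b) (Fin b) ℂ :=
  Matrix.of fun s t => K (i.succ, s) (i, t)

/-- Block upper Hessenberg: all blocks strictly below the first block subdiagonal vanish. -/
def BlockHessenberg {k b : ℕ} (K : Matrix (Fin (k + 1) × Fin b) (Fin k × Fin b) ℂ) : Prop :=
  ∀ (i : Fin (k + 1)) (j : Fin k), (j : ℕ) + 1 < (i : ℕ) → ∀ s t, K (i, s) (j, t) = 0

/-- The leading `bk × bk` principal (block) submatrix of a `b(k+1) × bk` block matrix. -/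
def headBlk {k b : ℕ} (K : Matrix (Fin (k + 1) × Fin b) (Fin k × Fin b) ℂ) :
    Matrix (Fin k × Fin b) (Fin k × Fin b) ℂ :=
  K.submatrix (fun p => (p.1.castSucc, p.2)) id

section BlockHessenberg

variable {k b : ℕ} {K H : Matrix (Fin (k + 1) × Fin b) (Fin k × Fin b) ℂ}

theorem BlockHessenberg.mulVec_succ_apply (hK : BlockHessenberg K)
    {x : Fin k × Fin b → ℂ} {i : Fin k} (hx : ∀ j, i < j → ∀ t, x (j, t) = 0) (s : Fin b) :
    (K *ᵥ x) (i.succ, s) = (subBlk K i *ᵥ fun t => x (i, t)) s := by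
  simp only [mulVec, dotProduct, Fintype.sum_prod_type, subBlk, of_apply]
  refine Finset.sum_eq_single i (fun j _ hji => Finset.sum_eq_zero fun t _ => ?_) (by simp)
  rcases lt_or_gt_of_ne hji with hlt | hgt
  · rw [hK i.succ j (by simp only [Fin.val_succ]; omega) s t, zero_mul]
  · rw [hx j hgt t, mul_zero]

/-- The blocks of `x` vanish from the last one upwards: once the later ones are zero, block row
`i + 1` of `K x = 0` and `H x = 0` reads `K_{i+1,i} xᵢ = 0 = H_{i+1,i} xᵢ`. -/
theorem BlockHessenberg.eq_zero_of_mulVec_eq_zero (hK : BlockHessenberg K)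
    (hH : BlockHessenberg H) (hsub : ∀ i, IsUnit (subBlk K i) ∨ IsUnit (subBlk H i))
    {x : Fin k × Fin b → ℂ} (hKx : K *ᵥ x = 0) (hHx : H *ᵥ x = 0) : x = 0 := by
  have hblock : ∀ i, (fun t => x (i, t)) = 0 := by
    intro i
    induction i using WellFoundedGT.induction with
    | _ i ih =>
      have hlater : ∀ j, i < j → ∀ t, x (j, t) = 0 := fun j hj t => congrFun (ih j hj) t
      have hKi : subBlk K i *ᵥ (fun t => x (i, t)) = 0 := funext fun s => by
        rw [← hK.mulVec_succ_apply hlater, hKx, Pi.zero_apply, Pi.zero_apply]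
      have hHi : subBlk H i *ᵥ (fun t => x (i, t)) = 0 := funext fun s => by
        rw [← hH.mulVec_succ_apply hlater, hHx, Pi.zero_apply, Pi.zero_apply]
      rcases hsub i with hunit | hunit
      · exact mulVec_injective_iff_isUnit.mpr hunit (by rw [hKi, mulVec_zero])
      · exact mulVec_injective_iff_isUnit.mpr hunit (by rw [hHi, mulVec_zero])
  exact funext fun ⟨i, s⟩ => congrFun (hblock i) s

end BlockHessenberg

section LastBlockRowZero

variable {k b : ℕ} {K H : Matrix (Fin (k + 1) × Fin b) (Fin k × Fin b) ℂ}

theorem mulVec_eq_zero_of_headBlk_mulVec_eq_zero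
    (hlast : ∀ (j : Fin k) (s t : Fin b), K (Fin.last k, s) (j, t) = 0)
    {x : Fin k × Fin b → ℂ} (hx : headBlk K *ᵥ x = 0) : K *ᵥ x = 0 := by
  funext ⟨i, s⟩
  induction i using Fin.lastCases with
  | last => simp [mulVec, dotProduct, hlast]
  | cast i => exact congrFun hx (i, s)

theorem mul_eq_submatrix_mul_headBlk {m : Type*} (V : Matrix m (Fin (k + 1) × Fin b) ℂ)
    (hlast : ∀ (j : Fin k) (s t : Fin b), K (Fin.last k, s) (j, t) = 0) :
    V * K = V.submatrix id (fun p : Fin k × Fin b => (p.1.castSucc, p.2)) * headBlk K := by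
  ext r ⟨j, t⟩
  simp only [mul_apply, Fintype.sum_prod_type, Fin.sum_univ_castSucc, hlast, mul_zero,
    Finset.sum_const_zero, add_zero, submatrix_apply, headBlk, id_eq]

theorem isUnit_headBlk (hK : BlockHessenberg K) (hH : BlockHessenberg H)
    (hsub : ∀ i, IsUnit (subBlk K i) ∨ IsUnit (subBlk H i))
    (hlast : ∀ (j : Fin k) (s t : Fin b), K (Fin.last k, s) (j, t) = 0)
    (hker : ∀ x, K *ᵥ x = 0 → H *ᵥ x = 0) : IsUnit (headBlk K) := by
  rw [isUnit_iff_isUnit_det, isUnit_iff_ne_zero, Ne, ← exists_mulVec_eq_zero_iff]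
  rintro ⟨x, hx0, hx⟩
  have hKx := mulVec_eq_zero_of_headBlk_mulVec_eq_zero hlast hx
  exact hx0 (hK.eq_zero_of_mulVec_eq_zero hH hsub hKx (hker x hKx))

end LastBlockRowZero

theorem conjTranspose_submatrix_mul_mul_of_orthonormal {m ι : Type*} [Fintype m] {k b : ℕ}
    {V : Matrix m (Fin (k + 1) × Fin b) ℂ} (horth : Vᴴ * V = 1)
    (M : Matrix (Fin (k + 1) × Fin b) ι ℂ) :
    (V.submatrix id fun p : Fin k × Fin b => (p.1.castSucc, p.2))ᴴ * (V * M)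
      = M.submatrix (fun p => (p.1.castSucc, p.2)) id := by
  rw [conjTranspose_submatrix, ← submatrix_id_id (V * M), ← submatrix_mul _ _ _ _ _
    Function.bijective_id, ← Matrix.mul_assoc, horth, Matrix.one_mul]

theorem brad_infinite_last_pole_projection_general {n k b : ℕ}
    (A : Matrix (Fin n) (Fin n) ℂ)
    (V : Matrix (Fin n) (Fin (k + 1) × Fin b) ℂ)
    (K H : Matrix (Fin (k + 1) × Fin b) (Fin k × Fin b) ℂ)
    (horth : Vᴴ * V = 1)
    (hbrad : A * (V * K) = V * H)
    (hKhess : BlockHessenberg K) (hHhess : BlockHessenberg H)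
    (hsub : ∀ i : Fin k, IsUnit (subBlk K i) ∨ IsUnit (subBlk H i))
    (hlast : ∀ (j : Fin k) (s t : Fin b), K (Fin.last k, s) (j, t) = 0) :
    IsUnit (headBlk K) ∧
      (V.submatrix id fun p : Fin k × Fin b => (p.1.castSucc, p.2))ᴴ * A *
          (V.submatrix id fun p : Fin k × Fin b => (p.1.castSucc, p.2))
        = headBlk H * (headBlk K)⁻¹ := by
  set W := V.submatrix id fun p : Fin k × Fin b => (p.1.castSucc, p.2)
  have hH : H = Vᴴ * A * V * K := by
    rw [Matrix.mul_assoc (Vᴴ * A), Matrix.mul_assoc, hbrad, ← Matrix.mul_assoc, horth,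
      Matrix.one_mul]
  have hunit : IsUnit (headBlk K) := isUnit_headBlk hKhess hHhess hsub hlast fun x hKx => by
    rw [hH, ← mulVec_mulVec, hKx, mulVec_zero]
  have hproj : Wᴴ * A * W * headBlk K = headBlk H := by
    rw [Matrix.mul_assoc _ W, ← mul_eq_submatrix_mul_headBlk V hlast, Matrix.mul_assoc, hbrad,
      conjTranspose_submatrix_mul_mul_of_orthonormal horth]
    rfl
  refine ⟨hunit, ?_⟩
  rw [← hproj, mul_nonsing_inv_cancel_right _ _ ((isUnit_iff_isUnit_det _).mp hunit)]

/-- For a block rational Arnoldi decomposition `A V_{k+1} K̲ = V_{k+1} H̲` whose last pole is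
infinite (the last block row of `K̲` vanishes), the leading principal submatrix `K_k` is
invertible and the projected matrix satisfies `V_kᴴ A V_k = H_k K_k⁻¹`. -/
theorem brad_infinite_last_pole_projection {n k b : ℕ}
    (A : Matrix (Fin n) (Fin n) ℂ)
    (V : Matrix (Fin n) (Fin (k + 1) × Fin b) ℂ)
    (K H : Matrix (Fin (k + 1) × Fin b) (Fin k × Fin b) ℂ)
    (horth : Vᴴ * V = 1)
    (hbrad : A * (V * K) = V * H)
    (hKhess : BlockHessenberg K) (hHhess : BlockHessenberg H)
    (hsub : ∀ i : Fin k, IsUnit (subBlk K i) ∨ IsUnit (subBlk H i))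
    (μ ν : Fin k → ℂ)
    (hμν : ∀ i : Fin k, (μ i ≠ 0 ∨ ν i ≠ 0) ∧ μ i • subBlk K i = ν i • subBlk H i)
    (hpoles : ∀ i : Fin k, ν i ≠ 0 → μ i / ν i ∉ spectrum ℂ A)
    (hlast : ∀ (j : Fin k) (s t : Fin b), K (Fin.last k, s) (j, t) = 0) :
    IsUnit (headBlk K) ∧
      (V.submatrix id fun p : Fin k × Fin b => (p.1.castSucc, p.2))ᴴ * A *
          (V.submatrix id fun p : Fin k × Fin b => (p.1.castSucc, p.2))
        = headBlk H * (headBlk K)⁻¹ :=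
  brad_infinite_last_pole_projection_general A V K H horth hbrad hKhess hHhess hsub hlast
end
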